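/- Let A ∈ ℝ^{2n×2n} be symmetric positive definite, partitioned into n×n blocks as A = [[A₁₁, A₁₂],[A₁₂ᵀ, A₂₂]]. Then W := A₁₁⁻¹A₁₂ satisfies ‖W‖₂² ≤ ‖A₁₁⁻¹‖₂ · ‖A₂₂‖₂. -/

import Mathlib

open Matrix

/-- Spectral norm (ℓ² operator norm) of a real square matrix. -/
noncomputable def specNorm {m : Type*} [Fintype m] [DecidableEq m] (M : Matrix m m ℝ) : ℝ :=
  ‖LinearMap.toContinuousLinearMap (Matrix.toEuclideanLin M)‖

/-- Frobenius norm of a real square matrix. -/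
noncomputable def frobNorm {m : Type*} [Fintype m] (M : Matrix m m ℝ) : ℝ :=
  Real.sqrt (∑ i, ∑ j, (M i j) ^ 2)

/-- Spectral condition number κ₂(M) = ‖M⁻¹‖₂ ‖M‖₂. -/
noncomputable def cond2 {m : Type*} [Fintype m] [DecidableEq m] (M : Matrix m m ℝ) : ℝ :=
  specNorm M⁻¹ * specNorm M

/-- Spectral radius of a real square matrix (via its complex spectrum). -/
noncomputable def specRad {m : Type*} [Fintype m] [DecidableEq m] (M : Matrix m m ℝ) : ℝ :=
  (spectralRadius ℂ (M.map (Complex.ofReal ·))).toReal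

/-- Lower triangular predicate. -/
def LowerTri {k : ℕ} (M : Matrix (Fin k) (Fin k) ℝ) : Prop := ∀ i j, i < j → M i j = 0
/-- Upper triangular predicate. -/
def UpperTri {k : ℕ} (M : Matrix (Fin k) (Fin k) ℝ) : Prop := ∀ i j, j < i → M i j = 0
/-- Positive diagonal entries predicate. -/
def PosDiag {k : ℕ} (M : Matrix (Fin k) (Fin k) ℝ) : Prop := ∀ i, 0 < M i i

/-- The standard symplectic matrix J = [[0, I], [-I, 0]]. -/
noncomputable def Jmat (n : ℕ) : Matrix (Fin n ⊕ Fin n) (Fin n ⊕ Fin n) ℝ :=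
  fromBlocks 0 1 (-1) 0

/-- M is symplectic iff MᵀJM = J. -/
def IsSymplectic {n : ℕ} (M : Matrix (Fin n ⊕ Fin n) (Fin n ⊕ Fin n) ℝ) : Prop :=
  Mᵀ * Jmat n * M = Jmat n

/-- Ω(M) = MᵀJM − J, the loss of symplecticity. -/
noncomputable def Omega {n : ℕ} (M : Matrix (Fin n ⊕ Fin n) (Fin n ⊕ Fin n) ℝ) :
    Matrix (Fin n ⊕ Fin n) (Fin n ⊕ Fin n) ℝ :=
  Mᵀ * Jmat n * M - Jmat n

/-!
Factor the positive definite `A₁₁⁻¹` as `Xᴴ X`. Then `W = Xᴴ (X A₁₂)`, so by submultiplicativity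
and the C⋆-identity `‖W‖² ≤ ‖X‖² ‖X A₁₂‖² = ‖A₁₁⁻¹‖ ‖X A₁₂‖²`. Since `A` is positive definite,
its Schur complement `A₂₂ - A₁₂ᴴ A₁₁⁻¹ A₁₂` is positive semidefinite, i.e.
`(X A₁₂)ᴴ (X A₁₂) ≤ A₂₂` in the Loewner order, and comparing quadratic forms gives
`‖X A₁₂‖² ≤ ‖A₂₂‖`.
-/

open scoped ComplexOrder Matrix.Norms.L2Operator MatrixOrder

namespace Matrix

lemma PosDef.toBlocks₁₁ {m n R : Type*} [Ring R] [PartialOrder R] [StarRing R]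
    {M : Matrix (m ⊕ n) (m ⊕ n) R} (h : M.PosDef) : M.toBlocks₁₁.PosDef :=
  h.submatrix Sum.inl_injective

variable {𝕜 m n : Type*} [RCLike 𝕜] [Fintype m] [Fintype n] [DecidableEq m] [DecidableEq n]

lemma re_inner_toEuclideanLin_le (P : Matrix n n 𝕜) (x : EuclideanSpace 𝕜 n) :
    RCLike.re (inner 𝕜 (toEuclideanLin P x) x) ≤ ‖P‖ * ‖x‖ ^ 2 :=
  calc RCLike.re (inner 𝕜 (toEuclideanLin P x) x) ≤ ‖toEuclideanLin P x‖ * ‖x‖ :=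
        re_inner_le_norm _ _
    _ ≤ ‖P‖ * ‖x‖ * ‖x‖ := by
        gcongr; exact ((toEuclideanLin.trans LinearMap.toContinuousLinearMap) P).le_opNorm x
    _ = ‖P‖ * ‖x‖ ^ 2 := by ring

lemma norm_toEuclideanLin_sq (M : Matrix m n 𝕜) (x : EuclideanSpace 𝕜 n) :
    ‖toEuclideanLin M x‖ ^ 2 = RCLike.re (inner 𝕜 (toEuclideanLin (Mᴴ * M) x) x) := by
  have : toEuclideanLin (Mᴴ * M) x = (toEuclideanLin M).adjoint (toEuclideanLin M x) := by
    rw [← toEuclideanLin_conjTranspose_eq_adjoint]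
    simp [toLpLin_apply, mulVec_mulVec]
  rw [this, LinearMap.adjoint_inner_left, inner_self_eq_norm_sq]

lemma l2_opNorm_sq_le_of_conjTranspose_mul_self_le {M : Matrix m n 𝕜} {P : Matrix n n 𝕜}
    (h : Mᴴ * M ≤ P) : ‖M‖ ^ 2 ≤ ‖P‖ := by
  have hP : 0 ≤ ‖P‖ := norm_nonneg P
  suffices ‖M‖ ≤ √‖P‖ by
    simpa [Real.sq_sqrt hP] using pow_le_pow_left₀ (norm_nonneg M) this 2
  refine ContinuousLinearMap.opNorm_le_bound _ (Real.sqrt_nonneg _) fun x => ?_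
  have hgap := (isPositive_toEuclideanLin_iff.mpr (le_iff.mp h)).2 x
  rw [map_sub, LinearMap.sub_apply, inner_sub_left, map_sub, sub_nonneg,
    ← norm_toEuclideanLin_sq] at hgap
  rw [← Real.sqrt_sq (norm_nonneg x), ← Real.sqrt_mul hP]
  exact Real.le_sqrt_of_sq_le (hgap.trans (re_inner_toEuclideanLin_le P x))

lemma l2_opNorm_inv_mul_sq_le {A : Matrix m m 𝕜} {B : Matrix m n 𝕜} {D : Matrix n n 𝕜}
    (h : (fromBlocks A B Bᴴ D).PosDef) : ‖A⁻¹ * B‖ ^ 2 ≤ ‖A⁻¹‖ * ‖D‖ := by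
  have hA : A.PosDef := by simpa using h.toBlocks₁₁
  have := hA.isUnit.invertible
  have hSchur : Bᴴ * A⁻¹ * B ≤ D := le_iff.mpr ((PosDef.fromBlocks₁₁ B D hA).mp h.posSemidef)
  obtain ⟨X, hX⟩ := CStarAlgebra.nonneg_iff_eq_star_mul_self.mp hA.inv.posSemidef.nonneg
  rw [star_eq_conjTranspose] at hX
  have hXB : ‖X * B‖ ^ 2 ≤ ‖D‖ :=
    l2_opNorm_sq_le_of_conjTranspose_mul_self_le (by
      simpa [hX, conjTranspose_mul, Matrix.mul_assoc] using hSchur)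
  have hX_sq : ‖X‖ ^ 2 = ‖A⁻¹‖ := by rw [hX, l2_opNorm_conjTranspose_mul_self, sq]
  calc ‖A⁻¹ * B‖ ^ 2 = ‖Xᴴ * (X * B)‖ ^ 2 := by rw [hX, Matrix.mul_assoc]
    _ ≤ (‖Xᴴ‖ * ‖X * B‖) ^ 2 := by gcongr; exact l2_opNorm_mul _ _
    _ = ‖X‖ ^ 2 * ‖X * B‖ ^ 2 := by rw [l2_opNorm_conjTranspose, mul_pow]
    _ ≤ ‖A⁻¹‖ * ‖D‖ := by rw [hX_sq]; gcongr

end Matrix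

lemma specNorm_eq_l2_opNorm {m : Type*} [Fintype m] [DecidableEq m] (M : Matrix m m ℝ) :
    specNorm M = ‖M‖ :=
  rfl

theorem stmt13_general {n : ℕ}
    (A11 A12 A22 : Matrix (Fin n) (Fin n) ℝ)
    (A : Matrix (Fin n ⊕ Fin n) (Fin n ⊕ Fin n) ℝ)
    (hA : A = fromBlocks A11 A12 A12ᵀ A22)
    (hpd : A.PosDef) :
    (specNorm (A11⁻¹ * A12)) ^ 2 ≤ specNorm A11⁻¹ * specNorm A22 := by
  rw [hA, ← conjTranspose_eq_transpose_of_trivial] at hpd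
  simpa only [specNorm_eq_l2_opNorm] using l2_opNorm_inv_mul_sq_le hpd

/-- For A symmetric positive definite, W = A₁₁⁻¹A₁₂ satisfies
‖W‖₂² ≤ ‖A₁₁⁻¹‖₂ ‖A₂₂‖₂. -/
theorem stmt13 {n : ℕ} (hn : 1 ≤ n)
    (A11 A12 A22 : Matrix (Fin n) (Fin n) ℝ)
    (A : Matrix (Fin n ⊕ Fin n) (Fin n ⊕ Fin n) ℝ)
    (hA : A = fromBlocks A11 A12 A12ᵀ A22)
    (hpd : A.PosDef) :
    (specNorm (A11⁻¹ * A12)) ^ 2 ≤ specNorm A11⁻¹ * specNorm A22 :=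
  stmt13_general A11 A12 A22 A hA hpd
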